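/- arXiv:1306.2405 — 2 statements merged into one kernel-verified Lean document; each statement's English description precedes it below -/
import Mathlib

section
/- Let G be a connected edge-coloured graph in which every vertex has at most one outgoing edge and at most one incoming edge. Then for all vertices v, v' ∈ V_G, if v ~_G v' then (G,v) ≅ (G,v'); i.e., on such graphs vertex bisimilarity coincides with the automorphism-orbit relation. -/
/-- An edge-coloured (multi)graph on vertex set `Fin n`: `col v w` is the set of
colours of directed edges from `v` to `w`. -/
structure ColGraph (C : Type) where
  n : ℕ
  col : Fin n → Fin n → Set C

namespace ColGraph

variable {C : Type}

/-- The rigidity condition: for each vertex, distinct outgoing edges have distinct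
colours and distinct incoming edges have distinct colours. -/
def Rigid (G : ColGraph C) : Prop :=
  (∀ (v w w' : Fin G.n) (c : C), c ∈ G.col v w → c ∈ G.col v w' → w = w') ∧
  (∀ (v w w' : Fin G.n) (c : C), c ∈ G.col w v → c ∈ G.col w' v → w = w')

/-- `φ` is an isomorphism of edge-coloured graphs from `G` to `G'`. -/
def IsIso (G G' : ColGraph C) (φ : Fin G.n ≃ Fin G'.n) : Prop :=
  ∀ v w : Fin G.n, G'.col (φ v) (φ w) = G.col v w

/-- `G ≅ G'`. -/
def Iso (G G' : ColGraph C) : Prop := ∃ φ : Fin G.n ≃ Fin G'.n, IsIso G G' φ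

/-- `(G,v) ≅ (G',v')`. -/
def IsoPt (G : ColGraph C) (v : Fin G.n) (G' : ColGraph C) (v' : Fin G'.n) : Prop :=
  ∃ φ : Fin G.n ≃ Fin G'.n, IsIso G G' φ ∧ φ v = v'

/-- The relabelled graph `α(G)`. -/
def relabel (G : ColGraph C) (α : Fin G.n ≃ Fin G.n) : ColGraph C where
  n := G.n
  col v w := G.col (α.symm v) (α.symm w)

/-- The DFA state set `S_G = V_G ∪ {⊥_v | v ∈ V_G}`: `Sum.inl v` is the vertex `v`,
`Sum.inr v` is the sink state `⊥_v`. -/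
abbrev State (G : ColGraph C) : Type := Fin G.n ⊕ Fin G.n

/-- Symbols: `Sum.inl c` is the colour `c`, `Sum.inr c` is the reverse colour `c⁻`. -/
abbrev Sym (C : Type) : Type := C ⊕ C

/-- Membership in the alphabet `Σ_G = C_G ∪ {c⁻ | c ∈ C_G}`, where `C_G` is the set of
colours of edges of `G`. -/
def InAlphabet (G : ColGraph C) : Sym C → Prop
  | Sum.inl c => ∃ v w, c ∈ G.col v w
  | Sum.inr c => ∃ v w, c ∈ G.col v w

open scoped Classical in
/-- The transition function `δ_G : S_G × Σ_G → S_G`. -/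
noncomputable def delta (G : ColGraph C) : State G → Sym C → State G
  | Sum.inl v, Sum.inl c =>
      if h : ∃ w, c ∈ G.col v w then Sum.inl h.choose else Sum.inr v
  | Sum.inl v, Sum.inr c =>
      if h : ∃ w, c ∈ G.col w v then Sum.inl h.choose else Sum.inr v
  | Sum.inr v, _ => Sum.inr v

/-- The extension `δ̂_G` of `δ_G` to words. -/
noncomputable def deltaHat (G : ColGraph C) (s : State G) (w : List (Sym C)) : State G :=
  w.foldl G.delta s

/-- Vertex bisimilarity `s ~_G s'`: for every word `w` over the alphabet `Σ_G`,
`δ̂_G(s,w) ∈ V_G ↔ δ̂_G(s',w) ∈ V_G`. -/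
def Bisim (G : ColGraph C) (s s' : State G) : Prop :=
  ∀ w : List (Sym C), (∀ x ∈ w, G.InAlphabet x) →
    ((G.deltaHat s w).isLeft = true ↔ (G.deltaHat s' w).isLeft = true)

/-- The underlying undirected (simple) graph of `G`. -/
def toSimple (G : ColGraph C) : SimpleGraph (Fin G.n) :=
  SimpleGraph.fromRel fun v w => (G.col v w).Nonempty

end ColGraph

/-! With at most one successor and one predecessor per vertex, a connected graph is a directed
path (some vertex has no successor) or a directed cycle. Bisimilar vertices have successors
reached by the same colours, and these successors are again bisimilar. On a path, bisimilar
vertices reach the sink in the same number of steps, so injectivity of the successor makes them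
equal. On a cycle the successor map is a permutation `σ` with `v' = σ^d v`; every vertex
`a = σ^k v` is then bisimilar to `σ^d a`, so the rotation `σ^d` preserves all edge colours. -/

theorem SimpleGraph.Connected.induction_on_adj {V : Type*} {H : SimpleGraph V} (hH : H.Connected)
    {p : V → Prop} (hp : ∀ a b, H.Adj a b → p a → p b) {a : V} (ha : p a) (b : V) :
    p b := by
  induction (H.reachable_iff_reflTransGen a b).1 (hH a b) with
  | refl => exact ha
  | tail _ hbc ih => exact hp _ _ hbc ih

namespace ColGraph

open Relation Sum

variable {C : Type} {G : ColGraph C}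

def Adj (G : ColGraph C) (v w : Fin G.n) : Prop := (G.col v w).Nonempty

lemma adj_or_adj_of_toSimple_adj {a b : Fin G.n} (h : G.toSimple.Adj a b) :
    G.Adj a b ∨ G.Adj b a :=
  ((SimpleGraph.fromRel_adj _ _ _).1 h).2

lemma deltaHat_cons (s : State G) (x : Sym C) (w : List (Sym C)) :
    G.deltaHat s (x :: w) = G.deltaHat (G.delta s x) w := rfl

lemma delta_inl_inl_isLeft {u : Fin G.n} {c : C} :
    (G.delta (inl u) (inl c)).isLeft ↔ ∃ w, c ∈ G.col u w := by
  by_cases h : ∃ w, c ∈ G.col u w <;> simp [delta, h]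

lemma delta_inl_inl_of_mem (hG : G.Rigid) {u w : Fin G.n} {c : C} (hc : c ∈ G.col u w) :
    G.delta (inl u) (inl c) = inl w := by
  have h : ∃ w, c ∈ G.col u w := ⟨w, hc⟩
  simp only [delta, dif_pos h]
  exact congrArg inl (hG.1 u _ w c h.choose_spec hc)

namespace Bisim

variable {a b a' : Fin G.n}

lemma symm {s s' : State G} (h : G.Bisim s s') : G.Bisim s' s :=
  fun w hw => (h w hw).symm

lemma exists_mem_col (hab : G.Bisim (inl a) (inl b)) {c : C} (hc : c ∈ G.col a a') :
    ∃ b', c ∈ G.col b b' := by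
  have h := hab [inl c] (by simpa using ⟨a, a', hc⟩)
  simp only [deltaHat, List.foldl_cons, List.foldl_nil, delta_inl_inl_isLeft] at h
  exact h.1 ⟨a', hc⟩

lemma delta (hG : G.Rigid) (hab : G.Bisim (inl a) (inl b)) {b' : Fin G.n} {c : C}
    (ha : c ∈ G.col a a') (hb : c ∈ G.col b b') : G.Bisim (inl a') (inl b') := by
  intro w hw
  have h := hab (inl c :: w) (List.forall_mem_cons.2 ⟨⟨a, a', ha⟩, hw⟩)
  rwa [deltaHat_cons, deltaHat_cons, delta_inl_inl_of_mem hG ha,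
    delta_inl_inl_of_mem hG hb] at h

lemma exists_adj (hG : G.Rigid) (hab : G.Bisim (inl a) (inl b)) (ha : G.Adj a a') :
    ∃ b', G.Adj b b' ∧ G.Bisim (inl a') (inl b') := by
  obtain ⟨c, hc⟩ := ha
  obtain ⟨b', hb'⟩ := hab.exists_mem_col hc
  exact ⟨b', ⟨c, hb'⟩, hab.delta hG hc hb'⟩

lemma col_subset (hout : ∀ v w w', G.Adj v w → G.Adj v w' → w = w')
    (hab : G.Bisim (inl a) (inl b)) {b' : Fin G.n} (hb : G.Adj b b') :
    G.col a a' ⊆ G.col b b' := by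
  intro c hc
  obtain ⟨b'', hb''⟩ := hab.exists_mem_col hc
  rwa [hout b b'' b' ⟨c, hb''⟩ hb] at hb''

end Bisim

lemma isIso_of_bisim (hout : ∀ v w w', G.Adj v w → G.Adj v w' → w = w')
    (φ : Equiv.Perm (Fin G.n)) (hφ : ∀ a b, G.Adj (φ a) (φ b) ↔ G.Adj a b)
    (hbis : ∀ a, G.Bisim (inl a) (inl (φ a))) : IsIso G G φ := by
  intro a b
  by_cases hab : G.Adj a b
  · exact (hbis a).symm.col_subset hout hab |>.antisymm
      ((hbis a).col_subset hout ((hφ a b).2 hab))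
  · rw [Set.not_nonempty_iff_eq_empty.1 hab,
      Set.not_nonempty_iff_eq_empty.1 (mt (hφ a b).1 hab)]

section Sink

variable {u : Fin G.n}

lemma reflTransGen_adj_sink (hconn : G.toSimple.Connected)
    (hout : ∀ v w w', G.Adj v w → G.Adj v w' → w = w') (hu : ∀ w, ¬ G.Adj u w)
    (a : Fin G.n) : ReflTransGen G.Adj a u := by
  refine hconn.induction_on_adj (p := (ReflTransGen G.Adj · u)) ?_ ReflTransGen.refl a
  intro x y hxy hx
  rcases adj_or_adj_of_toSimple_adj hxy with hxy | hyx
  · rcases hx.cases_head with rfl | ⟨z, hxz, hz⟩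
    · exact absurd hxy (hu y)
    · rwa [hout x y z hxy hxz]
  · exact .head hyx hx

lemma eq_of_bisim_of_sink (hG : G.Rigid) (hconn : G.toSimple.Connected)
    (hout : ∀ v w w', G.Adj v w → G.Adj v w' → w = w')
    (hin : ∀ v w w', G.Adj w v → G.Adj w' v → w = w') (hu : ∀ w, ¬ G.Adj u w)
    {a b : Fin G.n} (hab : G.Bisim (inl a) (inl b)) : a = b := by
  have hreach := reflTransGen_adj_sink hconn hout hu
  induction hreach a using ReflTransGen.head_induction_on generalizing b with
  | refl =>
    rcases (hreach b).cases_head with rfl | ⟨b', hbb', -⟩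
    · rfl
    · obtain ⟨u', hu', -⟩ := hab.symm.exists_adj hG hbb'
      exact absurd hu' (hu u')
  | @head a a' haa' _ ih =>
    obtain ⟨b', hbb', hab'⟩ := hab.exists_adj hG haa'
    exact hin _ a b haa' (ih hab' ▸ hbb')

end Sink

section Cycle

variable {σ : Equiv.Perm (Fin G.n)}

lemma exists_perm_adj_iff (hout : ∀ v w w', G.Adj v w → G.Adj v w' → w = w')
    (hin : ∀ v w w', G.Adj w v → G.Adj w' v → w = w') (hsucc : ∀ u, ∃ w, G.Adj u w) :
    ∃ σ : Equiv.Perm (Fin G.n), ∀ a b, G.Adj a b ↔ σ a = b := by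
  choose f hf using hsucc
  have hinj : Function.Injective f := fun a b hab => hin _ a b (hf a) (hab ▸ hf b)
  refine ⟨Equiv.ofBijective f (Finite.injective_iff_bijective.1 hinj), fun a b => ?_⟩
  exact ⟨fun hab => hout a _ b (hf a) hab, fun h => h ▸ hf a⟩

lemma sameCycle_of_connected (hconn : G.toSimple.Connected) (hσ : ∀ a b, G.Adj a b ↔ σ a = b)
    (a b : Fin G.n) : σ.SameCycle a b := by
  refine hconn.induction_on_adj (p := σ.SameCycle a) ?_ (Equiv.Perm.SameCycle.refl σ a) b
  intro x y hxy hx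
  rcases adj_or_adj_of_toSimple_adj hxy with hxy | hyx
  · rw [← (hσ x y).1 hxy]
    exact Equiv.Perm.sameCycle_apply_right.2 hx
  · rw [← (hσ y x).1 hyx] at hx
    exact Equiv.Perm.sameCycle_apply_right.1 hx

lemma adj_pow_apply_iff (hσ : ∀ a b, G.Adj a b ↔ σ a = b) (k : ℕ) (a b : Fin G.n) :
    G.Adj ((σ ^ k) a) ((σ ^ k) b) ↔ G.Adj a b := by
  rw [hσ, hσ, ← Equiv.Perm.mul_apply, (Commute.self_pow σ k).eq, Equiv.Perm.mul_apply,
    (σ ^ k).injective.eq_iff]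

lemma Bisim.pow_apply (hG : G.Rigid) (hσ : ∀ a b, G.Adj a b ↔ σ a = b) {a b : Fin G.n}
    (hab : G.Bisim (inl a) (inl b)) (k : ℕ) :
    G.Bisim (inl ((σ ^ k) a)) (inl ((σ ^ k) b)) := by
  induction k with
  | zero => exact hab
  | succ k ih =>
    obtain ⟨b', hb', hbis⟩ := ih.exists_adj hG ((hσ _ _).2 rfl)
    rw [pow_succ', Equiv.Perm.mul_apply, Equiv.Perm.mul_apply, (hσ _ _).1 hb']
    exact hbis

end Cycle

end ColGraph

theorem stmt_8 {C : Type} (G : ColGraph C) (hG : G.Rigid)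
    (hconn : (ColGraph.toSimple G).Connected)
    (hout : ∀ (v w w' : Fin G.n) (c c' : C), c ∈ G.col v w → c' ∈ G.col v w' → w = w')
    (hin : ∀ (v w w' : Fin G.n) (c c' : C), c ∈ G.col w v → c' ∈ G.col w' v → w = w')
    (v v' : Fin G.n) (h : G.Bisim (Sum.inl v) (Sum.inl v')) :
    ColGraph.IsoPt G v G v' := by
  open ColGraph in
  have hout' : ∀ v w w', G.Adj v w → G.Adj v w' → w = w' :=
    fun v w w' ⟨c, hc⟩ ⟨c', hc'⟩ => hout v w w' c c' hc hc'
  have hin' : ∀ v w w', G.Adj w v → G.Adj w' v → w = w' :=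
    fun v w w' ⟨c, hc⟩ ⟨c', hc'⟩ => hin v w w' c c' hc hc'
  by_cases hsink : ∃ u, ∀ w, ¬ G.Adj u w
  · obtain ⟨u, hu⟩ := hsink
    obtain rfl := eq_of_bisim_of_sink hG hconn hout' hin' hu h
    exact ⟨Equiv.refl _, fun _ _ => rfl, rfl⟩
  · push Not at hsink
    obtain ⟨σ, hσ⟩ := exists_perm_adj_iff hout' hin' hsink
    obtain ⟨d, rfl⟩ := (sameCycle_of_connected hconn hσ v v').exists_nat_pow_eq
    refine ⟨σ ^ d, isIso_of_bisim hout' _ (adj_pow_apply_iff hσ d) fun a => ?_, rfl⟩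
    obtain ⟨k, rfl⟩ := (sameCycle_of_connected hconn hσ v a).exists_nat_pow_eq
    have := h.pow_apply hG hσ k
    rwa [← Equiv.Perm.mul_apply, pow_mul_comm, Equiv.Perm.mul_apply] at this
end

section
/- The encoding ρ from site graphs to edge-coloured graphs is injective: for all site graphs S₀ and S₁, if ρ(S₀) = ρ(S₁) then S₀ = S₁. -/
/-- A site graph: vertices `Fin n`, undirected edges given as two-element sets of
(vertex, site) pairs, and a protein naming. -/
structure SiteGraph (N S : Type) where
  n : ℕ
  edges : Set (Set (Fin n × S))
  names : Fin n → N

namespace SiteGraph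

variable {N S : Type}

/-- Well-formedness of a site graph: every edge is a two-element set of
(vertex, site) pairs, distinct edges are disjoint, and the edge set is finite. -/
def Wf (S₀ : SiteGraph N S) : Prop :=
  (∀ e ∈ S₀.edges, ∃ p q : Fin S₀.n × S, p ≠ q ∧ e = {p, q}) ∧
  (∀ e ∈ S₀.edges, ∀ e' ∈ S₀.edges, e ≠ e' → e ∩ e' = ∅) ∧
  S₀.edges.Finite

/-- `φ` is a site-graph isomorphism from `S₀` to `S₁`. -/
def IsSIso (S₀ S₁ : SiteGraph N S) (φ : Fin S₀.n ≃ Fin S₁.n) : Prop :=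
  (∀ (v₁ v₂ : Fin S₀.n) (s₁ s₂ : S),
      ({(v₁, s₁), (v₂, s₂)} : Set (Fin S₀.n × S)) ∈ S₀.edges ↔
      ({(φ v₁, s₁), (φ v₂, s₂)} : Set (Fin S₁.n × S)) ∈ S₁.edges) ∧
  ∀ v : Fin S₀.n, S₀.names v = S₁.names (φ v)

/-- `S₀ ≅ S₁` as site graphs. -/
def SIso (S₀ S₁ : SiteGraph N S) : Prop := ∃ φ, IsSIso S₀ S₁ φ

variable [LinearOrder S]

/-- The set of site pairs `(s,s')` with `{(v,s),(w,s')} ∈ E`. -/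
def link (S₀ : SiteGraph N S) (v w : Fin S₀.n) : Set (S × S) :=
  {p | ({(v, p.1), (w, p.2)} : Set (Fin S₀.n × S)) ∈ S₀.edges}

/-- Strict lexicographic order on site pairs. -/
def lexLt (p q : S × S) : Prop := p.1 < q.1 ∨ (p.1 = q.1 ∧ p.2 < q.2)

/-- The directed edge relation of the encoding `ρ`: every loop `(v,v)` is an edge, and
for `v ≠ w`, `(v,w)` is an edge iff the lexicographically least pair `(s,s')` with
`{(v,s),(w,s')} ∈ E` satisfies `s ≤ s'`. -/
def dirEdge (S₀ : SiteGraph N S) (v w : Fin S₀.n) : Prop :=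
  v = w ∨ (v ≠ w ∧ ∃ p ∈ S₀.link v w,
    (∀ q ∈ S₀.link v w, p = q ∨ lexLt p q) ∧ p.1 ≤ p.2)

/-- The colour of the directed edge `(v,w)` in the encoding `ρ`: the set of site
pairs linking `v` to `w`, together with the protein name `ν(v)` if `v = w`. -/
def colourOf (S₀ : SiteGraph N S) (v w : Fin S₀.n) : Set ((S × S) ⊕ N) :=
  (Sum.inl '' S₀.link v w) ∪ (if v = w then {Sum.inr (S₀.names v)} else ∅)

/-- The encoding `ρ` of site graphs into edge-coloured graphs over the colour set
consisting of sets of elements of `(S × S) ⊕ N`. -/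
def rho (S₀ : SiteGraph N S) : ColGraph (Set ((S × S) ⊕ N)) where
  n := S₀.n
  col v w := {c | S₀.dirEdge v w ∧ c = S₀.colourOf v w}

end SiteGraph

/-! The encoding can be decoded. The site pairs linking `v` to `w` are read off the colours
of the edges `(v,w)` and `(w,v)`, at least one of which is present whenever `v` and `w` are
linked: the lexicographically least link, read in one direction or the other, has `s ≤ s'`.
The name of `v` is read off the colour of the loop at `v`. A well-formed site graph is
determined by its links and names, since every edge is a pair. -/

theorem Set.eq_of_forall_pair_mem_iff {α : Type*} {E₀ E₁ : Set (Set α)}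
    (h₀ : ∀ e ∈ E₀, ∃ p q, e = {p, q}) (h₁ : ∀ e ∈ E₁, ∃ p q, e = {p, q})
    (h : ∀ p q, {p, q} ∈ E₀ ↔ {p, q} ∈ E₁) : E₀ = E₁ := by
  ext e
  constructor
  · intro he
    obtain ⟨p, q, rfl⟩ := h₀ e he
    exact (h p q).1 he
  · intro he
    obtain ⟨p, q, rfl⟩ := h₁ e he
    exact (h p q).2 he

namespace SiteGraph

variable {N S : Type}

theorem injective_pair_of_ne {α : Type*} {v w : α} (hvw : v ≠ w) :
    Function.Injective fun p : S × S => ({(v, p.1), (w, p.2)} : Set (α × S)) := by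
  intro p q hpq
  rcases Set.pair_eq_pair_iff.1 hpq with ⟨h1, h2⟩ | ⟨h1, -⟩
  · exact Prod.ext (Prod.mk.inj h1).2 (Prod.mk.inj h2).2
  · exact absurd (Prod.mk.inj h1).1 hvw

def decodeLink {n : ℕ} (col : Fin n → Fin n → Set (Set ((S × S) ⊕ N))) (v w : Fin n) :
    Set (S × S) :=
  {p | ∃ c ∈ col v w, Sum.inl p ∈ c} ∪ {p | ∃ c ∈ col w v, Sum.inl p.swap ∈ c}

def decodeName {n : ℕ} (col : Fin n → Fin n → Set (Set ((S × S) ⊕ N))) (v : Fin n) :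
    Set N :=
  {x | ∃ c ∈ col v v, Sum.inr x ∈ c}

variable {A : SiteGraph N S}

theorem Wf.exists_eq_pair (hA : A.Wf) : ∀ e ∈ A.edges, ∃ p q, e = {p, q} := fun e he =>
  (hA.1 e he).imp fun _ ⟨q, _, he⟩ => ⟨q, he⟩

@[simp]
theorem swap_mem_link {v w : Fin A.n} {p : S × S} :
    p.swap ∈ A.link w v ↔ p ∈ A.link v w := by
  simp only [link, Set.mem_ofPred_eq, Prod.fst_swap, Prod.snd_swap, Set.pair_comm]

theorem link_finite (hA : A.edges.Finite) {v w : Fin A.n} (hvw : v ≠ w) :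
    (A.link v w).Finite :=
  Set.Finite.of_finite_image (hA.subset (by rintro _ ⟨p, hp, rfl⟩; exact hp))
    (injective_pair_of_ne hvw).injOn

@[simp]
theorem inl_mem_colourOf {v w : Fin A.n} {p : S × S} :
    Sum.inl p ∈ A.colourOf v w ↔ p ∈ A.link v w := by
  by_cases hvw : v = w <;> simp [colourOf, hvw]

@[simp]
theorem inr_mem_colourOf_self {v : Fin A.n} {x : N} :
    Sum.inr x ∈ A.colourOf v v ↔ x = A.names v := by
  simp [colourOf]

variable [LinearOrder S]

theorem fst_le_of_eq_or_lexLt {p q : S × S} (h : p = q ∨ lexLt p q) : p.1 ≤ q.1 := by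
  rcases h with rfl | h | ⟨h, -⟩
  · exact le_rfl
  · exact h.le
  · exact h.le

theorem exists_eq_or_lexLt {s : Set (S × S)} (hs : s.Finite) (hne : s.Nonempty) :
    ∃ p ∈ s, ∀ q ∈ s, p = q ∨ lexLt p q := by
  obtain ⟨p, hp, hmin⟩ := Set.exists_min_image s toLex hs hne
  refine ⟨p, hp, fun q hq => ?_⟩
  rcases (Prod.Lex.le_iff.1 (hmin q hq)) with h | ⟨h1, h2⟩
  · exact Or.inr (Or.inl h)
  · rcases h2.lt_or_eq with h2 | h2
    · exact Or.inr (Or.inr ⟨h1, h2⟩)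
    · exact Or.inl (Prod.ext h1 h2)

theorem dirEdge_or_dirEdge_of_mem_link (hA : A.edges.Finite) {v w : Fin A.n} {p : S × S}
    (hp : p ∈ A.link v w) : A.dirEdge v w ∨ A.dirEdge w v := by
  by_cases hvw : v = w
  · exact Or.inl (Or.inl hvw)
  obtain ⟨a, ha, ha_min⟩ := exists_eq_or_lexLt (link_finite hA hvw) ⟨p, hp⟩
  obtain ⟨b, hb, hb_min⟩ :=
    exists_eq_or_lexLt (link_finite hA (Ne.symm hvw)) ⟨p.swap, swap_mem_link.2 hp⟩
  by_cases ha_le : a.1 ≤ a.2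
  · exact Or.inl (Or.inr ⟨hvw, a, ha, ha_min, ha_le⟩)
  by_cases hb_le : b.1 ≤ b.2
  · exact Or.inr (Or.inr ⟨Ne.symm hvw, b, hb, hb_min, hb_le⟩)
  -- Minimality of `a` and `b`, tested on `b.swap` and `a.swap`: `a.1 ≤ b.2 < b.1 ≤ a.2 < a.1`.
  have hab : a.1 ≤ b.2 := fst_le_of_eq_or_lexLt (ha_min b.swap (swap_mem_link.1 hb))
  have hba : b.1 ≤ a.2 := fst_le_of_eq_or_lexLt (hb_min a.swap (swap_mem_link.2 ha))
  exact absurd ((hab.trans_lt (not_le.1 hb_le)).trans_le hba) (not_lt.2 (not_le.1 ha_le).le)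

theorem exists_mem_rho_col {v w : Fin A.n} {P : Set ((S × S) ⊕ N) → Prop} :
    (∃ c ∈ A.rho.col v w, P c) ↔ A.dirEdge v w ∧ P (A.colourOf v w) := by
  simp [rho]

theorem decodeLink_rho (hA : A.edges.Finite) (v w : Fin A.n) :
    decodeLink A.rho.col v w = A.link v w := by
  ext p
  simp only [decodeLink, Set.mem_union, Set.mem_ofPred_eq, exists_mem_rho_col,
    inl_mem_colourOf, swap_mem_link, ← or_and_right, and_iff_right_iff_imp]
  exact dirEdge_or_dirEdge_of_mem_link hA

theorem decodeName_rho (v : Fin A.n) : decodeName A.rho.col v = {A.names v} := by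
  ext x
  simp [decodeName, exists_mem_rho_col, dirEdge]

end SiteGraph

theorem stmt_11 {N S : Type} [LinearOrder S] (S₀ S₁ : SiteGraph N S)
    (h₀ : S₀.Wf) (h₁ : S₁.Wf)
    (h : SiteGraph.rho S₀ = SiteGraph.rho S₁) : S₀ = S₁ := by
  obtain ⟨n, E₀, ν₀⟩ := S₀
  obtain ⟨n₁, E₁, ν₁⟩ := S₁
  obtain rfl : n = n₁ := congrArg ColGraph.n h
  have hcol : (SiteGraph.rho ⟨n, E₀, ν₀⟩).col = (SiteGraph.rho ⟨n, E₁, ν₁⟩).col :=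
    eq_of_heq (ColGraph.mk.inj h).2
  have hlink (v w : Fin n) :
      SiteGraph.link ⟨n, E₀, ν₀⟩ v w = SiteGraph.link ⟨n, E₁, ν₁⟩ v w := by
    rw [← SiteGraph.decodeLink_rho h₀.2.2, ← SiteGraph.decodeLink_rho h₁.2.2, hcol]
    rfl
  have hnames (v : Fin n) : ν₀ v = ν₁ v := by
    refine Set.singleton_injective ?_
    rw [← SiteGraph.decodeName_rho (A := ⟨n, E₀, ν₀⟩),
      ← SiteGraph.decodeName_rho (A := ⟨n, E₁, ν₁⟩), hcol]
    rfl
  have hedges : E₀ = E₁ := Set.eq_of_forall_pair_mem_iff h₀.exists_eq_pair h₁.exists_eq_pair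
    fun p q => Set.ext_iff.1 (hlink p.1 q.1) (p.2, q.2)
  rw [hedges, funext hnames]
end
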